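/- The maximum of tr(W_K) over all time-varying control schedules ι : Fin K → Fin n equals Σ_{k=0}^{K-1} max_{i} R_i(k), where R_i(k) = ((A^k)^T A^k)_{ii}. -/
import Mathlib


open Matrix Finset

/-- Gramian of the schedule `ι`: `W_K(ι) = ∑ A^k e_{ι(K-1-k)} e_{ι(K-1-k)}ᵀ (Aᵀ)^k`. -/
noncomputable def gramianOf {n K : ℕ} (A : Matrix (Fin n) (Fin n) ℝ) (ι : Fin K → Fin n) :
    Matrix (Fin n) (Fin n) ℝ :=
  ∑ k : Fin K, A ^ (k : ℕ) *
    vecMulVec (Pi.single (ι k.rev) 1) (Pi.single (ι k.rev) 1) * (Aᵀ) ^ (k : ℕ)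

/-- The `2k`-communicability of node `i`: `R_i(k) = ((A^k)ᵀ A^k)_{ii}`. -/
def Rcomm {n : ℕ} (A : Matrix (Fin n) (Fin n) ℝ) (i : Fin n) (k : ℕ) : ℝ :=
  ((A ^ k)ᵀ * A ^ k) i i

lemma trace_term {n : ℕ} (A : Matrix (Fin n) (Fin n) ℝ) (i : Fin n) (k : ℕ) :
    (A ^ k * vecMulVec (Pi.single i 1) (Pi.single i 1) * (Aᵀ) ^ k).trace
      = Rcomm A i k := by
  simp [Matrix.trace, Matrix.diag, Matrix.mul_apply, vecMulVec_apply, Pi.single_apply,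
    Matrix.transpose_pow, Matrix.transpose_apply, mul_ite, ite_mul, mul_comm, Rcomm]

lemma trace_gramian {n K : ℕ} (A : Matrix (Fin n) (Fin n) ℝ) (ι : Fin K → Fin n) :
    (gramianOf A ι).trace = ∑ k : Fin K, Rcomm A (ι k.rev) (k : ℕ) := by
  rw [gramianOf, Matrix.trace_sum]
  exact Finset.sum_congr rfl fun k _ => trace_term A (ι k.rev) k

theorem max_trace_TVCS {n K : ℕ} (hn : 0 < n) (hK : 0 < K)
    (A : Matrix (Fin n) (Fin n) ℝ) :
    (⨆ ι : Fin K → Fin n, (gramianOf A ι).trace) =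
      ∑ k : Fin K, ⨆ i : Fin n, Rcomm A i (k : ℕ) := by
  have : NeZero n := ⟨hn.ne'⟩
  apply le_antisymm
  · apply ciSup_le
    intro ι
    rw [trace_gramian]
    apply Finset.sum_le_sum
    intro k _
    exact le_ciSup (f := fun i : Fin n => Rcomm A i (k : ℕ)) (Set.Finite.bddAbove (Set.finite_range _)) (ι k.rev)
  · -- choose maximizers
    have hmax : ∀ k : Fin K, ∃ i : Fin n, ∀ j : Fin n,
        Rcomm A j (k : ℕ) ≤ Rcomm A i (k : ℕ) := fun k =>
      Finite.exists_max fun i => Rcomm A i (k : ℕ)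
    choose g hg using hmax
    have h1 : ∀ k : Fin K, (⨆ i : Fin n, Rcomm A i (k : ℕ)) = Rcomm A (g k) (k : ℕ) := by
      intro k
      exact le_antisymm (ciSup_le (hg k))
        (le_ciSup (f := fun i : Fin n => Rcomm A i (k : ℕ)) (Set.Finite.bddAbove (Set.finite_range _)) (g k))
    calc ∑ k : Fin K, ⨆ i : Fin n, Rcomm A i (k : ℕ)
        = ∑ k : Fin K, Rcomm A (g k) (k : ℕ) := Finset.sum_congr rfl fun k _ => h1 k
      _ = (gramianOf A (fun k => g k.rev)).trace := by
          rw [trace_gramian]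
          exact Finset.sum_congr rfl fun k _ => by rw [Fin.rev_rev]
      _ ≤ ⨆ ι : Fin K → Fin n, (gramianOf A ι).trace :=
          le_ciSup (f := fun ι : Fin K → Fin n => (gramianOf A ι).trace) (Set.Finite.bddAbove (Set.finite_range _)) _
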